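/- For all a, b in the Radford Hopf algebra R = R_{mn}(q), the functional α satisfies α(ab) = α(a)α(b) + (ξ^n - 1) · Σ_{k+l=n, 0<k<n} (1/((k)!_q (l)!_q)) · (α*β^{k})(a) · (α^{mk+1}*β^{l})(b), where all products and powers of α and β are taken in the convolution algebra R* and (k)!_q denotes the q-factorial. -/

import Mathlib

open scoped TensorProduct

/-- The convolution product on the dual `R* = Hom_K(R, K)` of a coalgebra:
`(f * h)(a) = Σ f(a₍₁₎) h(a₍₂₎)`. -/
noncomputable def conv (K : Type*) {R : Type*} [CommRing K] [AddCommMonoid R]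
    [Module K R] [Coalgebra K R] (f h : R →ₗ[K] K) : R →ₗ[K] K :=
  LinearMap.mul' K K ∘ₗ TensorProduct.map f h ∘ₗ Coalgebra.comul

/-- Convolution powers in `R*`; the zeroth power is the unit `ε` of `R*`. -/
noncomputable def convPow (K : Type*) {R : Type*} [CommRing K] [AddCommMonoid R]
    [Module K R] [Coalgebra K R] (f : R →ₗ[K] K) : ℕ → (R →ₗ[K] K)
  | 0 => Coalgebra.counit
  | j + 1 => conv K f (convPow K f j)

/-- The `q`-factorial `(j)!_q = (1)_q (2)_q ⋯ (j)_q` where `(i)_q = 1 + q + ⋯ + q^{i-1}`. -/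
def qFactorial {K : Type*} [Field K] (q : K) : ℕ → K
  | 0 => 1
  | j + 1 => qFactorial q j * (∑ i ∈ Finset.range (j + 1), q ^ i)


def qbc {K : Type*} [Field K] (q : K) : ℕ → ℕ → K
  | 0, 0 => 1
  | 0, _ + 1 => 0
  | _ + 1, 0 => 1
  | j + 1, s + 1 => q ^ (j - s) * qbc q j s + qbc q j (s + 1)

lemma qbc_zero_right {K : Type*} [Field K] (q : K) (j : ℕ) : qbc q j 0 = 1 := by
  cases j <;> rfl

lemma qbc_succ_succ {K : Type*} [Field K] (q : K) (j s : ℕ) :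
    qbc q (j + 1) (s + 1) = q ^ (j - s) * qbc q j s + qbc q j (s + 1) := rfl

lemma qbc_of_lt {K : Type*} [Field K] (q : K) : ∀ {j s : ℕ}, j < s → qbc q j s = 0
  | 0, _ + 1, _ => rfl
  | j + 1, s + 1, h => by
      rw [qbc_succ_succ, qbc_of_lt (q := q) (show j < s by omega),
        qbc_of_lt (q := q) (show j < s + 1 by omega)]
      ring

lemma qbc_one {K : Type*} [Field K] (q : K) :
    ∀ j : ℕ, qbc q j 1 = ∑ i ∈ Finset.range j, q ^ i
  | 0 => by rw [Finset.range_zero, Finset.sum_empty]; rfl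
  | j + 1 => by
      rw [qbc_succ_succ, qbc_zero_right, qbc_one q j, Finset.sum_range_succ, Nat.sub_zero]
      ring

section radford
variable {K : Type*} [Field K] {R : Type*} [Ring R] [HopfAlgebra K R]
variable {q : K} {g x : R}

lemma x_gpow (hxg : x * g = q • (g * x)) (b : ℕ) :
    x * g ^ b = q ^ b • (g ^ b * x) := by
  induction b with
  | zero => simp
  | succ b ih =>
    rw [pow_succ, ← mul_assoc, ih, smul_mul_assoc, mul_assoc, hxg, mul_smul_comm,
      smul_smul, ← pow_succ, ← mul_assoc]

lemma xpow_gpow (hxg : x * g = q • (g * x)) (a b : ℕ) :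
    x ^ a * g ^ b = q ^ (a * b) • (g ^ b * x ^ a) := by
  induction a with
  | zero => simp
  | succ a ih =>
    rw [pow_succ, mul_assoc, x_gpow hxg, mul_smul_comm, ← mul_assoc, ih, smul_mul_assoc,
      smul_smul, ← pow_add, mul_assoc, ← pow_succ]
    congr 2
    ring

lemma tensor_pow_expand (hxg : x * g = q • (g * x)) (j : ℕ) :
    (x ⊗ₜ[K] g + 1 ⊗ₜ[K] x) ^ j =
      ∑ s ∈ Finset.range (j + 1), qbc q j s • ((x ^ s) ⊗ₜ[K] (g ^ s * x ^ (j - s))) := by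
  induction j with
  | zero => simp [Algebra.TensorProduct.one_def, qbc_zero_right]
  | succ j ih =>
    rw [pow_succ, ih, Finset.sum_mul]
    have hterm : ∀ s ∈ Finset.range (j + 1),
        (qbc q j s • ((x ^ s) ⊗ₜ[K] (g ^ s * x ^ (j - s)))) * (x ⊗ₜ[K] g + 1 ⊗ₜ[K] x)
          = (q ^ (j - s) * qbc q j s) • ((x ^ (s + 1)) ⊗ₜ[K] (g ^ (s + 1) * x ^ (j - s)))
            + qbc q j s • ((x ^ s) ⊗ₜ[K] (g ^ s * x ^ (j - s + 1))) := by
      intro s _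
      rw [mul_add, smul_mul_assoc, smul_mul_assoc, Algebra.TensorProduct.tmul_mul_tmul,
        Algebra.TensorProduct.tmul_mul_tmul]
      have h1 : (g ^ s * x ^ (j - s)) * g = q ^ (j - s) • (g ^ (s + 1) * x ^ (j - s)) := by
        have hx1 := xpow_gpow hxg (j - s) 1
        rw [pow_one, mul_one] at hx1
        rw [mul_assoc, hx1, mul_smul_comm, ← mul_assoc, ← pow_succ]
      have h2 : (g ^ s * x ^ (j - s)) * x = g ^ s * x ^ (j - s + 1) := by
        rw [mul_assoc, ← pow_succ]
      rw [h1, h2, TensorProduct.tmul_smul, smul_smul, ← pow_succ, mul_comm (qbc q j s), mul_one]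
    rw [Finset.sum_congr rfl hterm, Finset.sum_add_distrib]
    conv_rhs => rw [Finset.sum_range_succ' _ (j + 1)]
    have hre : ∀ s ∈ Finset.range (j + 1),
        qbc q (j + 1) (s + 1) • ((x ^ (s + 1)) ⊗ₜ[K] (g ^ (s + 1) * x ^ (j + 1 - (s + 1))))
          = (q ^ (j - s) * qbc q j s) • ((x ^ (s + 1)) ⊗ₜ[K] (g ^ (s + 1) * x ^ (j - s)))
            + qbc q j (s + 1) • ((x ^ (s + 1)) ⊗ₜ[K] (g ^ (s + 1) * x ^ (j - s))) := by
      intro s _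
      rw [qbc_succ_succ, add_smul, Nat.succ_sub_succ]
    rw [Finset.sum_congr rfl hre, Finset.sum_add_distrib, add_assoc]
    congr 1
    rw [Finset.sum_range_succ' (fun s => qbc q j s • ((x ^ s) ⊗ₜ[K] (g ^ s * x ^ (j - s + 1)))) j,
      Finset.sum_range_succ (fun s => qbc q j (s + 1) • ((x ^ (s + 1)) ⊗ₜ[K] (g ^ (s + 1) * x ^ (j - s)))) j,
      qbc_of_lt q (show j < j + 1 by omega), zero_smul, add_zero]
    congr 1
    · refine Finset.sum_congr rfl fun s hs => ?_
      have hs' := Finset.mem_range.mp hs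
      have he : j - (s + 1) + 1 = j - s := by omega
      rw [he]
    · rw [qbc_zero_right, qbc_zero_right, Nat.sub_zero, Nat.sub_zero]

lemma comul_basis (hxg : x * g = q • (g * x))
    (hcg : Coalgebra.comul (R := K) g = g ⊗ₜ[K] g)
    (hcx : Coalgebra.comul (R := K) x = x ⊗ₜ[K] g + 1 ⊗ₜ[K] x) (i j : ℕ) :
    Coalgebra.comul (R := K) (g ^ i * x ^ j) =
      ∑ s ∈ Finset.range (j + 1),
        qbc q j s • ((g ^ i * x ^ s) ⊗ₜ[K] (g ^ (i + s) * x ^ (j - s))) := by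
  have h1 : Coalgebra.comul (R := K) (g ^ i * x ^ j)
      = (Coalgebra.comul (R := K) g) ^ i * (Coalgebra.comul (R := K) x) ^ j := by
    rw [← Bialgebra.comulAlgHom_apply K R, map_mul, map_pow, map_pow,
      Bialgebra.comulAlgHom_apply, Bialgebra.comulAlgHom_apply]
  rw [h1, hcg, hcx, Algebra.TensorProduct.tmul_pow, tensor_pow_expand hxg, Finset.mul_sum]
  refine Finset.sum_congr rfl fun s hs => ?_
  rw [mul_smul_comm, Algebra.TensorProduct.tmul_mul_tmul, ← mul_assoc, ← pow_add]

lemma conv_eval (hxg : x * g = q • (g * x))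
    (hcg : Coalgebra.comul (R := K) g = g ⊗ₜ[K] g)
    (hcx : Coalgebra.comul (R := K) x = x ⊗ₜ[K] g + 1 ⊗ₜ[K] x)
    (f h : R →ₗ[K] K) (i j : ℕ) :
    conv K f h (g ^ i * x ^ j) =
      ∑ s ∈ Finset.range (j + 1),
        qbc q j s * (f (g ^ i * x ^ s) * h (g ^ (i + s) * x ^ (j - s))) := by
  simp only [conv, LinearMap.comp_apply]
  rw [comul_basis hxg hcg hcx, map_sum, map_sum]
  refine Finset.sum_congr rfl fun s hs => ?_
  rw [map_smul, map_smul, TensorProduct.map_tmul, LinearMap.mul'_apply, smul_eq_mul]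

end radford

/-- for all `a, b ∈ R = R_{mn}(q)`, the functional `α` satisfies
`α(ab) = α(a)α(b) + (ξ^n - 1) Σ_{k+l=n, 0<k<n} (1/((k)!_q (l)!_q)) (α*β^k)(a) (α^{mk+1}*β^l)(b)`,
products and powers taken in the convolution algebra `R*`. -/
theorem radford_alpha_comul_formula (K : Type*) [Field K] [IsAlgClosed K]
    (m n : ℕ) (hm : 2 ≤ m) (hn : 1 ≤ n) (hchar : ¬ (ringChar K ∣ m * n))
    (q : K) (hq : IsPrimitiveRoot q n)
    (ξ : K) (hξ : IsPrimitiveRoot ξ (m * n)) (hξm : ξ ^ m = q)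
    (R : Type*) [Ring R] [HopfAlgebra K R] (g x : R)
    (hgo : g ^ (m * n) = 1) (hxn : x ^ n = g ^ n - 1) (hxg : x * g = q • (g * x))
    (B : Module.Basis (Fin (m * n) × Fin n) K R)
    (hB : ∀ p : Fin (m * n) × Fin n, B p = g ^ (p.1 : ℕ) * x ^ (p.2 : ℕ))
    (hcg : Coalgebra.comul (R := K) g = g ⊗ₜ[K] g)
    (hcx : Coalgebra.comul (R := K) x = x ⊗ₜ[K] g + 1 ⊗ₜ[K] x)
    (heg : Coalgebra.counit (R := K) g = (1 : K))
    (hex : Coalgebra.counit (R := K) x = (0 : K))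
    (α β : R →ₗ[K] K)
    (hα : ∀ (i : Fin (m * n)) (j : Fin n),
      α (g ^ (i : ℕ) * x ^ (j : ℕ)) = if (j : ℕ) = 0 then ξ ^ (i : ℕ) else 0)
    (hβ : ∀ (i : Fin (m * n)) (j : Fin n),
      β (g ^ (i : ℕ) * x ^ (j : ℕ)) = if (j : ℕ) = 1 then 1 else 0) :
    ∀ a b : R, α (a * b) =
      α a * α b + (ξ ^ n - 1) *
        ∑ k ∈ Finset.Ioo 0 n,
          (qFactorial q k * qFactorial q (n - k))⁻¹ *
            ((conv K α (convPow K β k)) a *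
              (conv K (convPow K α (m * k + 1)) (convPow K β (n - k))) b) := by

  -- basic positivity and periodicity facts
  have hmn : 0 < m * n := Nat.mul_pos (by omega) hn
  have hgmod : ∀ i : ℕ, g ^ i = g ^ (i % (m * n)) := by
    intro i
    conv_lhs => rw [← Nat.div_add_mod i (m * n)]
    rw [pow_add, pow_mul, hgo, one_pow, one_mul]
  have hξmod : ∀ i : ℕ, ξ ^ i = ξ ^ (i % (m * n)) := by
    intro i
    conv_lhs => rw [← Nat.div_add_mod i (m * n)]
    rw [pow_add, pow_mul, hξ.pow_eq_one, one_pow, one_mul]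
  have αv : ∀ i j : ℕ, j < n → α (g ^ i * x ^ j) = if j = 0 then ξ ^ i else 0 := by
    intro i j hj
    have h2 := hα ⟨i % (m * n), Nat.mod_lt _ hmn⟩ ⟨j, hj⟩
    rw [hgmod i, h2, ← hξmod i]
  have βv : ∀ i j : ℕ, j < n → β (g ^ i * x ^ j) = if j = 1 then 1 else 0 := by
    intro i j hj
    have h2 := hβ ⟨i % (m * n), Nat.mod_lt _ hmn⟩ ⟨j, hj⟩
    rw [hgmod i, h2]
  have εv : ∀ i j : ℕ, (Coalgebra.counit (R := K) (g ^ i * x ^ j) : K)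
      = if j = 0 then 1 else 0 := by
    intro i j
    rw [← Bialgebra.counitAlgHom_apply K R, map_mul, map_pow, map_pow,
      Bialgebra.counitAlgHom_apply, Bialgebra.counitAlgHom_apply, heg, hex, one_pow, one_mul,
      zero_pow_eq]
  have βpow : ∀ l : ℕ, ∀ i j : ℕ, j < n → convPow K β l (g ^ i * x ^ j)
      = if j = l then qFactorial q l else 0 := by
    intro l
    induction l with
    | zero => intro i j hj; exact εv i j
    | succ l ih =>
      intro i j hj
      show conv K β (convPow K β l) (g ^ i * x ^ j) = _
      rw [conv_eval hxg hcg hcx]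
      rcases Nat.eq_zero_or_pos j with rfl | hj0
      · rw [Finset.sum_eq_zero, if_neg (by omega)]
        intro s hs
        have hs0 : s = 0 := by have := Finset.mem_range.mp hs; omega
        subst hs0
        rw [βv i 0 hn, if_neg (by omega), zero_mul, mul_zero]
      · rw [Finset.sum_eq_single_of_mem 1 (Finset.mem_range.mpr (by omega))]
        · rw [βv i 1 (by omega), if_pos rfl, one_mul, ih (i + 1) (j - 1) (by omega)]
          rcases eq_or_ne j (l + 1) with rfl | hne
          · rw [qbc_one, Nat.add_sub_cancel, if_pos rfl, if_pos rfl,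
              show qFactorial q (l + 1)
                = qFactorial q l * (∑ i ∈ Finset.range (l + 1), q ^ i) from rfl]
            ring
          · rw [if_neg (by omega), if_neg hne, mul_zero]
        · intro s hs hs1
          rw [βv i s (by have := Finset.mem_range.mp hs; omega), if_neg hs1, zero_mul, mul_zero]
  have αpow : ∀ t : ℕ, ∀ i j : ℕ, j < n → convPow K α t (g ^ i * x ^ j)
      = if j = 0 then ξ ^ (t * i) else 0 := by
    intro t
    induction t with
    | zero =>
      intro i j hj
      have h0 := εv i j
      simp only [Nat.zero_mul, pow_zero]
      exact h0
    | succ t ih =>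
      intro i j hj
      show conv K α (convPow K α t) (g ^ i * x ^ j) = _
      rw [conv_eval hxg hcg hcx,
        Finset.sum_eq_single_of_mem 0 (Finset.mem_range.mpr (by omega))]
      · rw [qbc_zero_right, αv i 0 hn, if_pos rfl, Nat.add_zero, Nat.sub_zero, ih i j hj,
          one_mul]
        split_ifs with h
        · rw [← pow_add]; congr 1; ring
        · rw [mul_zero]
      · intro s hs hs0
        rw [αv i s (by have := Finset.mem_range.mp hs; omega), if_neg hs0, zero_mul, mul_zero]
  have Fv : ∀ k i j : ℕ, j < n → conv K α (convPow K β k) (g ^ i * x ^ j)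
      = if j = k then ξ ^ i * qFactorial q k else 0 := by
    intro k i j hj
    rw [conv_eval hxg hcg hcx,
      Finset.sum_eq_single_of_mem 0 (Finset.mem_range.mpr (by omega))]
    · rw [qbc_zero_right, αv i 0 hn, if_pos rfl, Nat.add_zero, Nat.sub_zero, βpow k i j hj,
        one_mul]
      split_ifs with h
      · rfl
      · rw [mul_zero]
    · intro s hs hs0
      rw [αv i s (by have := Finset.mem_range.mp hs; omega), if_neg hs0, zero_mul, mul_zero]
  have Gv : ∀ t l i j : ℕ, j < n → conv K (convPow K α t) (convPow K β l) (g ^ i * x ^ j)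
      = if j = l then ξ ^ (t * i) * qFactorial q l else 0 := by
    intro t l i j hj
    rw [conv_eval hxg hcg hcx,
      Finset.sum_eq_single_of_mem 0 (Finset.mem_range.mpr (by omega))]
    · rw [qbc_zero_right, αpow t i 0 hn, if_pos rfl, Nat.add_zero, Nat.sub_zero,
        βpow l i j hj, one_mul]
      split_ifs with h
      · rfl
      · rw [mul_zero]
    · intro s hs hs0
      rw [αpow t i s (by have := Finset.mem_range.mp hs; omega), if_neg hs0, zero_mul,
        mul_zero]
  have αfull : ∀ i J : ℕ, J < 2 * n →
      α (g ^ i * x ^ J) = if J = 0 then ξ ^ i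
        else if J = n then (ξ ^ n - 1) * ξ ^ i else 0 := by
    intro i J hJ
    rcases lt_or_ge J n with h | h
    · rw [αv i J h]
      rcases Nat.eq_zero_or_pos J with rfl | h0
      · rw [if_pos rfl, if_pos rfl]
      · rw [if_neg (by omega), if_neg (by omega), if_neg (by omega)]
    · have hq1 : q ^ ((J - n) * n) = 1 := by
        rw [mul_comm, pow_mul, hq.pow_eq_one, one_pow]
      have hxJ : (x : R) ^ J = g ^ n * x ^ (J - n) - x ^ (J - n) := by
        calc x ^ J = x ^ (J - n) * x ^ n := by rw [← pow_add]; congr 1; omega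
          _ = x ^ (J - n) * g ^ n - x ^ (J - n) := by rw [hxn, mul_sub, mul_one]
          _ = g ^ n * x ^ (J - n) - x ^ (J - n) := by rw [xpow_gpow hxg, hq1, one_smul]
      rw [hxJ, mul_sub, ← mul_assoc, ← pow_add, map_sub,
        αv (i + n) (J - n) (by omega), αv i (J - n) (by omega)]
      split_ifs with h1 h2 h3 h4 h5 <;>
        first
          | (exfalso; omega)
          | (rw [pow_add]; ring)
          | simp
  have geom_ne : ∀ kk : ℕ, 0 < kk → kk < n → (∑ i ∈ Finset.range kk, q ^ i) ≠ 0 := by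
    intro kk h0 hkn
    have hqk : q ^ kk ≠ 1 := by
      intro hcon
      have hdvd := (hq.pow_eq_one_iff_dvd kk).mp hcon
      have := Nat.le_of_dvd h0 hdvd
      omega
    intro hzero
    have hgs := geom_sum_mul q kk
    rw [hzero, zero_mul] at hgs
    exact hqk (sub_eq_zero.mp hgs.symm)
  have qf_ne : ∀ kk : ℕ, kk < n → qFactorial q kk ≠ 0 := by
    intro kk
    induction kk with
    | zero => intro _; exact one_ne_zero
    | succ kk ih =>
      intro h
      show qFactorial q kk * _ ≠ 0
      exact mul_ne_zero (ih (by omega)) (geom_ne (kk + 1) (by omega) h)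
  have hprod : ∀ i j i' j' : ℕ,
      (g ^ i * x ^ j) * (g ^ i' * x ^ j') = q ^ (j * i') • (g ^ (i + i') * x ^ (j + j')) := by
    intro i j i' j'
    rw [mul_assoc, ← mul_assoc (x ^ j), xpow_gpow hxg, smul_mul_assoc, mul_smul_comm]
    congr 1
    rw [mul_assoc (g ^ i'), ← mul_assoc (g ^ i), ← pow_add, ← pow_add]
  have key : (LinearMap.mul K R).compr₂ α =
      (LinearMap.mul K K).compl₁₂ α α + (ξ ^ n - 1) •
        ∑ k ∈ Finset.Ioo 0 n, (qFactorial q k * qFactorial q (n - k))⁻¹ •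
          (LinearMap.mul K K).compl₁₂ (conv K α (convPow K β k))
            (conv K (convPow K α (m * k + 1)) (convPow K β (n - k))) := by
    apply B.ext
    rintro ⟨i, j⟩
    apply B.ext
    rintro ⟨i', j'⟩
    rw [hB, hB]
    simp only [LinearMap.compr₂_apply, LinearMap.mul_apply', LinearMap.add_apply,
      LinearMap.smul_apply, LinearMap.sum_apply, LinearMap.compl₁₂_apply, smul_eq_mul]
    rw [hprod, map_smul, smul_eq_mul,
      αfull ((i : ℕ) + (i' : ℕ)) ((j : ℕ) + (j' : ℕ)) (by have := j.isLt; have := j'.isLt; omega),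
      αv (i : ℕ) (j : ℕ) j.isLt, αv (i' : ℕ) (j' : ℕ) j'.isLt]
    have hFG : ∀ kk ∈ Finset.Ioo 0 n,
        (qFactorial q kk * qFactorial q (n - kk))⁻¹ *
          (conv K α (convPow K β kk) (g ^ (i : ℕ) * x ^ (j : ℕ)) *
            conv K (convPow K α (m * kk + 1)) (convPow K β (n - kk))
              (g ^ (i' : ℕ) * x ^ (j' : ℕ)))
          = if (j : ℕ) = kk ∧ (j' : ℕ) = n - kk
              then ξ ^ (i : ℕ) * ξ ^ ((m * kk + 1) * (i' : ℕ)) else 0 := by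
      intro kk hkk
      obtain ⟨hk0, hkn⟩ := Finset.mem_Ioo.mp hkk
      have h1 := qf_ne kk hkn
      have h2 := qf_ne (n - kk) (by omega)
      rw [Fv kk (i : ℕ) (j : ℕ) j.isLt,
        Gv (m * kk + 1) (n - kk) (i' : ℕ) (j' : ℕ) j'.isLt]
      rcases eq_or_ne ((j : ℕ)) kk with hA | hA
      · rcases eq_or_ne ((j' : ℕ)) (n - kk) with hB | hB
        · rw [if_pos hA, if_pos hB, if_pos ⟨hA, hB⟩]
          field_simp
        · rw [if_neg hB, mul_zero, mul_zero, if_neg (by tauto)]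
      · rw [if_neg hA, zero_mul, mul_zero, if_neg (by tauto)]
    rw [Finset.sum_congr rfl hFG]
    have hjn := j.isLt
    have hj'n := j'.isLt
    rcases Nat.eq_zero_or_pos (j : ℕ) with hj0 | hj0
    · rw [Finset.sum_eq_zero (fun kk hkk => if_neg (by
        rintro ⟨hc1, hc2⟩
        have := (Finset.mem_Ioo.mp hkk).1
        omega)), mul_zero, add_zero]
      split_ifs <;> first | (exfalso; omega) | simp [hj0, pow_add]
    · rcases eq_or_ne ((j : ℕ) + (j' : ℕ)) n with hsum | hsum
      · rw [Finset.sum_eq_single_of_mem (j : ℕ) (Finset.mem_Ioo.mpr ⟨hj0, hjn⟩)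
          (fun kk hkk hne => if_neg (by rintro ⟨hc1, hc2⟩; exact hne hc1.symm)),
          if_pos (⟨rfl, by omega⟩ : (j : ℕ) = (j : ℕ) ∧ (j' : ℕ) = n - (j : ℕ))]
        split_ifs <;> first | (exfalso; omega) | (rw [← hξm]; ring)
      · rw [Finset.sum_eq_zero (fun kk hkk => if_neg (by
          rintro ⟨hc1, hc2⟩
          have := (Finset.mem_Ioo.mp hkk).2
          omega)), mul_zero, add_zero]
        split_ifs <;> first | (exfalso; omega) | simp
  intro a b
  have h := LinearMap.congr_fun (LinearMap.congr_fun key a) b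
  simp only [LinearMap.compr₂_apply, LinearMap.mul_apply', LinearMap.add_apply,
    LinearMap.smul_apply, LinearMap.sum_apply, LinearMap.compl₁₂_apply, smul_eq_mul] at h
  exact h
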